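/- Fix δ ∈ (0,1), a finite set 𝒫, and a sequence π_t > 0 with ∑_{t≥1} π_t⁻¹ = 1. Suppose that for each t ≥ 1 and each p ∈ 𝒫, conditionally the random variable f(p) is Gaussian with mean μ_{t−1}(p) and standard deviation σ_{t−1}(p) ≥ 0. Set φ_t = 2·log(|𝒫|·π_t/δ). Then P(∀t ≥ 1, ∀p ∈ 𝒫 : |f(p) − μ_{t−1}(p)| ≤ √φ_t · σ_{t−1}(p)) ≥ 1 − δ. -/

import Mathlib

open MeasureTheory ProbabilityTheory Real Set

lemma deriv_aux (x : ℝ) :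
    HasDerivAt (fun y : ℝ => -Real.exp (-y^2/2)) (x * Real.exp (-x^2/2)) x := by
  have h1 : HasDerivAt (fun y : ℝ => -y^2/2) (-x) x := by
    have := ((hasDerivAt_pow 2 x).neg.div_const 2)
    refine this.congr_deriv ?_
    simp; ring
  have h2 := (h1.exp).neg
  refine h2.congr_deriv ?_
  ring

lemma integrableOn_x_exp (c : ℝ) :
    IntegrableOn (fun x : ℝ => x * Real.exp (-x^2/2)) (Ioi c) := by
  have h := integrable_mul_exp_neg_mul_sq (by norm_num : (0:ℝ) < 1/2)
  have h2 : (fun x : ℝ => x * Real.exp (-(1/2) * x^2)) = fun x : ℝ => x * Real.exp (-x^2/2) := by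
    funext x; congr 1; ring_nf
  rw [h2] at h
  exact h.integrableOn

lemma integrableOn_exp_sq (c : ℝ) :
    IntegrableOn (fun x : ℝ => Real.exp (-x^2/2)) (Ioi c) := by
  have h := integrable_exp_neg_mul_sq (by norm_num : (0:ℝ) < 1/2)
  have h2 : (fun x : ℝ => Real.exp (-(1/2) * x^2)) = fun x : ℝ => Real.exp (-x^2/2) := by
    funext x; congr 1; ring
  rw [h2] at h
  exact h.integrableOn

lemma integral_x_exp_Ioi (c : ℝ) :
    ∫ x in Ioi c, x * Real.exp (-x^2/2) = Real.exp (-c^2/2) := by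
  have htend : Filter.Tendsto (fun y : ℝ => -Real.exp (-y^2/2)) Filter.atTop (nhds 0) := by
    rw [show (0:ℝ) = -0 by ring]
    refine Filter.Tendsto.neg ?_
    refine Real.tendsto_exp_atBot.comp ?_
    have h1 : Filter.Tendsto (fun y : ℝ => y^2) Filter.atTop Filter.atTop :=
      Filter.tendsto_pow_atTop (by norm_num)
    have hneg : Filter.Tendsto (fun y : ℝ => -y^2) Filter.atTop Filter.atBot :=
      Filter.tendsto_neg_atBot_iff.mpr h1
    have h2 := hneg.atBot_div_const (r := 2) (by norm_num)
    exact h2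
  have := integral_Ioi_of_hasDerivAt_of_tendsto' (f' := fun x => x * Real.exp (-x^2/2))
    (fun x _ => deriv_aux x) (integrableOn_x_exp c) htend
  rw [this]; ring

lemma integral_x_exp_interval (c : ℝ) :
    ∫ x in (0:ℝ)..c, x * Real.exp (-x^2/2) = 1 - Real.exp (-c^2/2) := by
  have h := intervalIntegral.integral_eq_sub_of_hasDerivAt
    (f := fun y : ℝ => -Real.exp (-y^2/2)) (f' := fun x => x * Real.exp (-x^2/2))
    (a := 0) (b := c) (fun x _ => deriv_aux x) ?_
  · rw [h]; simp; ring
  · exact (Continuous.intervalIntegrable (by continuity) _ _)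

lemma tail_real (c : ℝ) (hc : 0 ≤ c) :
    ∫ x in Ioi c, Real.exp (-x^2/2) ≤ Real.sqrt (2*π) / 2 * Real.exp (-c^2/2) := by
  have hs : (0:ℝ) < Real.sqrt (2*π) := Real.sqrt_pos.mpr (by positivity)
  rcases le_or_gt (2 / Real.sqrt (2*π)) c with hge | hlt
  · -- large c : compare with (1/c) x exp
    have hc0 : (0:ℝ) < c := lt_of_lt_of_le (by positivity) hge
    have step1 : ∫ x in Ioi c, Real.exp (-x^2/2)
        ≤ ∫ x in Ioi c, c⁻¹ * (x * Real.exp (-x^2/2)) := by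
      refine setIntegral_mono_on (integrableOn_exp_sq c)
        ((integrableOn_x_exp c).const_mul c⁻¹) measurableSet_Ioi ?_
      intro x hx
      have hx' : c < x := hx
      have hxpos : 0 < x := lt_trans hc0 hx'
      have h1 : 1 ≤ c⁻¹ * x := by
        rw [← inv_mul_cancel₀ hc0.ne']
        exact mul_le_mul_of_nonneg_left hx'.le (by positivity)
      nlinarith [Real.exp_pos (-x^2/2)]
    rw [MeasureTheory.integral_const_mul, integral_x_exp_Ioi] at step1
    refine step1.trans ?_
    have h2 : c⁻¹ ≤ Real.sqrt (2*π) / 2 := by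
      rw [inv_le_iff_one_le_mul₀ hc0]
      calc (1:ℝ) = Real.sqrt (2*π) / 2 * (2 / Real.sqrt (2*π)) := by field_simp
        _ ≤ Real.sqrt (2*π) / 2 * c := by
            exact mul_le_mul_of_nonneg_left hge (by positivity)
    exact mul_le_mul_of_nonneg_right h2 (Real.exp_pos _).le
  · -- small c
    have hsplit : ∫ x in Ioi (0:ℝ), Real.exp (-x^2/2)
        = (∫ x in (0:ℝ)..c, Real.exp (-x^2/2)) + ∫ x in Ioi c, Real.exp (-x^2/2) := by
      rw [intervalIntegral.integral_of_le hc, ← MeasureTheory.setIntegral_union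
        (Set.Ioc_disjoint_Ioi le_rfl) measurableSet_Ioi
        ((integrableOn_exp_sq 0).mono_set Set.Ioc_subset_Ioi_self) (integrableOn_exp_sq c),
        Set.Ioc_union_Ioi_eq_Ioi hc]
    have hhalf : ∫ x in Ioi (0:ℝ), Real.exp (-x^2/2) = Real.sqrt (2*π) / 2 := by
      have := integral_gaussian_Ioi (1/2)
      have h2 : (fun x : ℝ => Real.exp (-(1/2) * x^2)) = fun x : ℝ => Real.exp (-x^2/2) := by
        funext x; congr 1; ring
      rw [h2] at this
      rw [this]
      rw [show π / (1/2 : ℝ) = 2 * π by ring]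
    have key : Real.sqrt (2*π) / 2 * (1 - Real.exp (-c^2/2))
        ≤ ∫ x in (0:ℝ)..c, Real.exp (-x^2/2) := by
      rw [← integral_x_exp_interval c, ← intervalIntegral.integral_const_mul]
      refine intervalIntegral.integral_mono_on hc ?_ ?_ ?_
      · exact (Continuous.intervalIntegrable (by continuity) _ _)
      · exact (Continuous.intervalIntegrable (by continuity) _ _)
      · intro x hx
        obtain ⟨hx0, hxc⟩ := hx
        have hxle : x ≤ 2 / Real.sqrt (2*π) := le_trans hxc hlt.le
        have h3 : Real.sqrt (2*π) / 2 * x ≤ 1 := by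
          rw [div_mul_eq_mul_div, div_le_one (by norm_num)]
          calc Real.sqrt (2*π) * x ≤ Real.sqrt (2*π) * (2 / Real.sqrt (2*π)) :=
            mul_le_mul_of_nonneg_left hxle hs.le
          _ = 2 := by field_simp
        nlinarith [Real.exp_pos (-x^2/2)]
    have := hsplit ▸ hhalf
    nlinarith [key, Real.exp_pos (-c^2/2)]

lemma std_tail (c : ℝ) (hc : 0 ≤ c) :
    gaussianReal 0 1 {x | c < |x|} ≤ ENNReal.ofReal (Real.exp (-c^2/2)) := by
  have hv : (1 : NNReal) ≠ 0 := one_ne_zero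
  have hs : (0:ℝ) < Real.sqrt (2*π) := Real.sqrt_pos.mpr (by positivity)
  -- symmetry: N (Iic (-c)) = N (Ici c)
  have hmap : (gaussianReal 0 1).map (fun x => -x) = gaussianReal 0 1 := by
    have := gaussianReal_map_const_mul (μ := 0) (v := 1) (-1)
    simp only [neg_one_mul, mul_zero] at this
    rw [this]
    congr 1
    ext
    norm_num
  have hsym : gaussianReal 0 1 (Iic (-c)) = gaussianReal 0 1 (Ici c) := by
    conv_lhs => rw [← hmap]
    rw [Measure.map_apply measurable_neg measurableSet_Iic]
    congr 1
    ext x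
    simp
  have hsub : {x : ℝ | c < |x|} ⊆ Iic (-c) ∪ Ici c := by
    intro x hx
    have hx' : c < |x| := hx
    rcases abs_cases x with ⟨h1, _⟩ | ⟨h1, _⟩
    · right; exact le_of_lt (by rw [h1] at hx'; exact hx')
    · left; simp only [mem_Iic]; rw [h1] at hx'; linarith
  have hIci : gaussianReal 0 1 (Ici c)
      = ENNReal.ofReal ((Real.sqrt (2*π))⁻¹ * ∫ x in Ioi c, Real.exp (-x^2/2)) := by
    rw [gaussianReal_apply_eq_integral 0 hv]
    congr 1
    rw [MeasureTheory.integral_Ici_eq_integral_Ioi, ← MeasureTheory.integral_const_mul]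
    refine setIntegral_congr_fun measurableSet_Ioi fun x _ => ?_
    simp [gaussianPDFReal]
  calc gaussianReal 0 1 {x | c < |x|} ≤ gaussianReal 0 1 (Iic (-c) ∪ Ici c) :=
        measure_mono hsub
    _ ≤ gaussianReal 0 1 (Iic (-c)) + gaussianReal 0 1 (Ici c) := measure_union_le _ _
    _ = 2 * gaussianReal 0 1 (Ici c) := by rw [hsym, two_mul]
    _ ≤ ENNReal.ofReal (Real.exp (-c^2/2)) := by
        rw [hIci, ← ENNReal.ofReal_ofNat, ← ENNReal.ofReal_mul (by norm_num)]
        refine ENNReal.ofReal_le_ofReal ?_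
        have h1 := tail_real c hc
        have h2 : (0:ℝ) ≤ (Real.sqrt (2*π))⁻¹ := by positivity
        calc 2 * ((Real.sqrt (2*π))⁻¹ * ∫ x in Ioi c, Real.exp (-x^2/2))
            ≤ 2 * ((Real.sqrt (2*π))⁻¹ * (Real.sqrt (2*π) / 2 * Real.exp (-c^2/2))) := by
              refine mul_le_mul_of_nonneg_left (mul_le_mul_of_nonneg_left h1 h2) (by norm_num)
          _ = Real.exp (-c^2/2) := by field_simp

lemma gen_tail (m σ c : ℝ) (hσ : 0 ≤ σ) (hc : 0 ≤ c) :
    gaussianReal m (⟨σ^2, sq_nonneg σ⟩ : NNReal) {x | c * σ < |x - m|}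
      ≤ ENNReal.ofReal (Real.exp (-c^2/2)) := by
  have hSmeas : MeasurableSet {x : ℝ | c * σ < |x - m|} := by
    have : {x : ℝ | c * σ < |x - m|} = (fun x => |x - m|) ⁻¹' Ioi (c * σ) := rfl
    rw [this]
    exact ((measurable_id.sub_const m).abs) measurableSet_Ioi
  rcases eq_or_lt_of_le hσ with hσ0 | hσpos
  · have hv0 : (⟨σ^2, sq_nonneg σ⟩ : NNReal) = 0 := by
      ext; simp [← hσ0]
    rw [show gaussianReal m (⟨σ^2, sq_nonneg σ⟩ : NNReal) = Measure.dirac m from (congrArg (gaussianReal m) hv0).trans (gaussianReal_zero_var m), Measure.dirac_apply' m hSmeas]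
    have : m ∉ {x : ℝ | c * σ < |x - m|} := by simp [← hσ0, mul_nonneg hc hσ]
    rw [Set.indicator_of_notMem this]
    exact zero_le
  · have h1 : (gaussianReal 0 1).map (fun x => σ * x + m)
        = gaussianReal m (⟨σ^2, sq_nonneg σ⟩ : NNReal) := by
      have hm1 : (gaussianReal 0 1).map (fun x => σ * x)
          = gaussianReal 0 (⟨σ^2, sq_nonneg σ⟩ : NNReal) := by
        have := gaussianReal_map_const_mul (μ := 0) (v := 1) σ
        rw [this]; simp; rfl
      have hcomp : (fun x : ℝ => x + m) ∘ (fun x : ℝ => σ * x) = fun x => σ * x + m := rfl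
      rw [← hcomp, ← Measure.map_map (measurable_add_const m) (measurable_const_mul σ),
        hm1]
      exact (gaussianReal_map_add_const m).trans (by rw [zero_add])
    rw [← h1, Measure.map_apply ((measurable_const_mul σ).add_const m) hSmeas]
    have hpre : (fun x : ℝ => σ * x + m) ⁻¹' {x | c * σ < |x - m|} = {x | c < |x|} := by
      ext x
      simp only [Set.mem_preimage, Set.mem_setOf_eq, add_sub_cancel_right, abs_mul,
        abs_of_pos hσpos]
      rw [mul_comm c σ, mul_lt_mul_iff_right₀ hσpos]
    rw [hpre]
    exact std_tail c hc

/-- Gaussian confidence bound over a finite decision set: with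
    φ_t = 2·log(|P|·π_t/δ), with probability at least 1 − δ, for all t ≥ 1 and
    all p, |f_t(p) − μ_{t−1}(p)| ≤ √φ_t · σ_{t−1}(p). -/
theorem stmt_16 (Ω : Type*) [MeasureSpace Ω] [IsProbabilityMeasure (volume : Measure Ω)]
    (P : Type*) [Fintype P] (δ : ℝ) (hδ : δ ∈ Set.Ioo (0 : ℝ) 1)
    (πs : ℕ → ℝ) (hπ : ∀ t ≥ 1, 0 < πs t) (hsum : ∑' t : ℕ, (πs (t + 1))⁻¹ = 1)
    (X : ℕ → P → Ω → ℝ) (μ σs : ℕ → P → ℝ) (hσ : ∀ t p, 0 ≤ σs t p)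
    (hgauss : ∀ t ≥ 1, ∀ p : P,
      Measure.map (X t p) volume =
        gaussianReal (μ (t - 1) p) (⟨(σs (t - 1) p) ^ 2, sq_nonneg _⟩ : NNReal))
    (φ : ℕ → ℝ)
    (hφ : ∀ t, φ t = 2 * Real.log ((Fintype.card P : ℝ) * πs t / δ)) :
    ENNReal.ofReal (1 - δ) ≤
      (volume : Measure Ω) {ω | ∀ t ≥ 1, ∀ p : P,
        |X t p ω - μ (t - 1) p| ≤ Real.sqrt (φ t) * σs (t - 1) p} := by
  obtain ⟨hδ0, hδ1⟩ := hδ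
  set G : Set Ω := {ω | ∀ t ≥ 1, ∀ p : P,
        |X t p ω - μ (t - 1) p| ≤ Real.sqrt (φ t) * σs (t - 1) p} with hG
  rcases isEmpty_or_nonempty P with hP | hP
  · have hGuniv : G = Set.univ := by
      rw [Set.eq_univ_iff_forall]
      intro ω t ht p
      exact isEmptyElim p
    rw [hGuniv, measure_univ]
    exact ENNReal.ofReal_le_one.mpr (by linarith)
  -- nonempty case
  have hKpos : 0 < (Fintype.card P : ℝ) := by exact_mod_cast Fintype.card_pos
  set K : ℝ := (Fintype.card P : ℝ) with hKdef
  -- bad sets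
  set S : ℕ → P → Set ℝ :=
    fun t p => {x | Real.sqrt (φ t) * σs (t - 1) p < |x - μ (t - 1) p|} with hS
  have hSmeas : ∀ t p, MeasurableSet (S t p) := by
    intro t p
    exact ((measurable_id.sub_const _).abs) measurableSet_Ioi
  have hAE : ∀ t, 1 ≤ t → ∀ p, AEMeasurable (X t p) volume := by
    intro t ht p
    refine aemeasurable_of_map_neZero ⟨?_⟩
    rw [hgauss t ht p]
    exact (IsProbabilityMeasure.ne_zero (μ := gaussianReal _ (_ : NNReal)))
  -- individual bad probability
  have hbad : ∀ s : ℕ, ∀ p : P,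
      volume (X (s+1) p ⁻¹' S (s+1) p) ≤ ENNReal.ofReal (δ * (πs (s+1))⁻¹ / K) := by
    intro s p
    have hmap := hgauss (s+1) (by omega) p
    have h1 : volume (X (s+1) p ⁻¹' S (s+1) p)
        = gaussianReal (μ (s+1-1) p) (⟨(σs (s+1-1) p)^2, sq_nonneg _⟩ : NNReal)
          (S (s+1) p) := by
      rw [← hmap, Measure.map_apply_of_aemeasurable (hAE (s+1) (by omega) p)
        (hSmeas (s+1) p)]
    rw [h1]
    have h2 := gen_tail (μ (s+1-1) p) (σs (s+1-1) p) (Real.sqrt (φ (s+1)))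
      (hσ _ p) (Real.sqrt_nonneg _)
    refine (h2.trans ?_)
    refine ENNReal.ofReal_le_ofReal ?_
    -- real inequality : exp(-(√φ)²/2) ≤ δ π⁻¹ / K
    set t := s + 1 with htdef
    have hπt : 0 < πs t := hπ t (by omega)
    set a : ℝ := K * πs t / δ with hadef
    have ha : 0 < a := by positivity
    have hainv : a⁻¹ = δ * (πs t)⁻¹ / K := by
      rw [hadef]
      field_simp
    rw [← hainv]
    by_cases h0 : 0 ≤ φ t
    · rw [Real.sq_sqrt h0, hφ t, ← hadef,
        show -(2 * Real.log a) / 2 = -Real.log a by ring,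
        Real.exp_neg, Real.exp_log ha]
    · rw [Real.sqrt_eq_zero_of_nonpos (le_of_not_ge h0)]
      norm_num
      have hlog : Real.log a < 0 := by
        have := hφ t
        rw [← hadef] at this
        nlinarith [le_of_not_ge h0, this]
      have ha1 : a ≤ 1 := by
        have := Real.exp_log ha
        nlinarith [Real.exp_lt_exp.mpr hlog, Real.exp_zero, this]
      exact (one_le_inv₀ ha).mpr ha1
  -- summability
  have hsumm : Summable (fun s : ℕ => (πs (s+1))⁻¹) := by
    by_contra h
    rw [tsum_eq_zero_of_not_summable h] at hsum
    norm_num at hsum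
  have hnn : ∀ s : ℕ, 0 ≤ (πs (s+1))⁻¹ := fun s => (inv_nonneg).mpr (hπ _ (by omega)).le
  -- union bound
  set U : Set Ω := ⋃ s : ℕ, ⋃ p : P, X (s+1) p ⁻¹' S (s+1) p with hU
  have hUbound : volume U ≤ ENNReal.ofReal δ := by
    calc volume U ≤ ∑' s : ℕ, volume (⋃ p : P, X (s+1) p ⁻¹' S (s+1) p) :=
          measure_iUnion_le _
      _ ≤ ∑' s : ℕ, ∑' p : P, volume (X (s+1) p ⁻¹' S (s+1) p) :=
          ENNReal.tsum_le_tsum fun s => measure_iUnion_le _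
      _ ≤ ∑' s : ℕ, ∑' _ : P, ENNReal.ofReal (δ * (πs (s+1))⁻¹ / K) :=
          ENNReal.tsum_le_tsum fun s => ENNReal.tsum_le_tsum fun p => hbad s p
      _ = ∑' s : ℕ, ENNReal.ofReal (δ * (πs (s+1))⁻¹) := by
          refine tsum_congr fun s => ?_
          rw [tsum_fintype]
          rw [Finset.sum_const, nsmul_eq_mul, Finset.card_univ]
          rw [← ENNReal.ofReal_natCast (Fintype.card P),
            ← ENNReal.ofReal_mul (by positivity)]
          congr 1
          rw [← hKdef]
          have hπs : πs (s + 1) ≠ 0 := (hπ _ (by omega)).ne'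
          field_simp
      _ = ENNReal.ofReal δ * ∑' s : ℕ, ENNReal.ofReal ((πs (s+1))⁻¹) := by
          rw [← ENNReal.tsum_mul_left]
          exact tsum_congr fun s => ENNReal.ofReal_mul hδ0.le
      _ = ENNReal.ofReal δ := by
          rw [← ENNReal.ofReal_tsum_of_nonneg hnn hsumm, hsum,
            ENNReal.ofReal_one, mul_one]
  -- covering
  have hcover : (Set.univ : Set Ω) ⊆ G ∪ U := by
    intro ω _
    by_cases hω : ω ∈ G
    · exact Or.inl hω
    · refine Or.inr ?_
      rw [hG] at hω
      simp only [Set.mem_setOf_eq] at hω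
      push_neg at hω
      obtain ⟨t, ht, p, hp⟩ := hω
      refine Set.mem_iUnion.mpr ⟨t - 1, Set.mem_iUnion.mpr ⟨p, ?_⟩⟩
      have ht1 : t - 1 + 1 = t := by omega
      rw [ht1]
      exact hp
  -- conclude
  have hmain : (1 : ENNReal) ≤ volume G + ENNReal.ofReal δ := by
    calc (1 : ENNReal) = volume (Set.univ : Set Ω) := measure_univ.symm
      _ ≤ volume (G ∪ U) := measure_mono hcover
      _ ≤ volume G + volume U := measure_union_le _ _
      _ ≤ volume G + ENNReal.ofReal δ := add_le_add_right hUbound _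
  have hfinal : 1 - ENNReal.ofReal δ ≤ volume G := tsub_le_iff_right.mpr hmain
  have heq : ENNReal.ofReal (1 - δ) = 1 - ENNReal.ofReal δ := by
    rw [ENNReal.ofReal_sub 1 hδ0.le, ENNReal.ofReal_one]
  rw [heq]
  exact hfinal
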